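/- Let n ≥ 2 and let f be an admissible functional on triples of permutations of {1,…,n}. Let π be a permutation of {1,…,n}, let π̄ = w₀∘π be its complement, and suppose 1 ≤ j < k ≤ n are positions with π̄(j) > π̄(k); let σ be π̄ with the entries in positions j and k swapped, and suppose ℓ(σ) = ℓ(π̄) − 1. If i is an index with either k ≤ i or i+1 ≤ j (the swapped positions both lie on one side of the gap between i and i+1), then f(π, s_i, σ) = 0. -/

import Mathlib

/- Background definitions: descent-cycling for Schubert problems on S_n,
   with permutations modeled as `Equiv.Perm (Fin n)` (0-indexed positions:
   position i here corresponds to position i+1 in 1-indexed notation). -/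

namespace DC

/-- A triple of permutations of {1,…,n}. -/
abbrev Triple (n : ℕ) := Equiv.Perm (Fin n) × Equiv.Perm (Fin n) × Equiv.Perm (Fin n)

/-- The length ℓ(π) = number of inversions of π. -/
def len {n : ℕ} (π : Equiv.Perm (Fin n)) : ℕ :=
  (Finset.univ.filter (fun p : Fin n × Fin n => p.1 < p.2 ∧ π p.2 < π p.1)).card

/-- π has a descent at (0-indexed) position i, i.e. π(i) > π(i+1). -/
def Descent {n : ℕ} (π : Equiv.Perm (Fin n)) (i : ℕ) : Prop :=
  ∃ h : i + 1 < n, π ⟨i + 1, h⟩ < π ⟨i, Nat.lt_of_succ_lt h⟩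

/-- π has an ascent at (0-indexed) position i, i.e. π(i) < π(i+1). -/
def Ascent {n : ℕ} (π : Equiv.Perm (Fin n)) (i : ℕ) : Prop :=
  ∃ h : i + 1 < n, π ⟨i, Nat.lt_of_succ_lt h⟩ < π ⟨i + 1, h⟩

/-- The adjacent transposition s_i swapping (0-indexed) i and i+1. -/
def s (n i : ℕ) : Equiv.Perm (Fin n) :=
  if h : i + 1 < n then Equiv.swap ⟨i, Nat.lt_of_succ_lt h⟩ ⟨i + 1, h⟩ else 1

/-- The longest permutation w₀ : m ↦ n+1−m (0-indexed: m ↦ n−1−m). -/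
def w0 (n : ℕ) : Equiv.Perm (Fin n) := Fin.revPerm

/-- The complement π̄ = w₀ ∘ π of a permutation. -/
def compl {n : ℕ} (π : Equiv.Perm (Fin n)) : Equiv.Perm (Fin n) := w0 n * π

/-- A Schubert problem: a triple of permutations whose lengths sum to n(n−1)/2. -/
def IsSchubert {n : ℕ} (P : Triple n) : Prop :=
  len P.1 + len P.2.1 + len P.2.2 = n.choose 2

/-- A Schubert problem is dc-trivial if at some position all three permutations ascend. -/
def DCTrivial {n : ℕ} (P : Triple n) : Prop :=
  IsSchubert P ∧ ∃ i : ℕ, Ascent P.1 i ∧ Ascent P.2.1 i ∧ Ascent P.2.2 i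

/-- The three Schubert problems obtainable from (u,v,w) by adding a descent at i. -/
def MoveSet {n : ℕ} (u v w : Equiv.Perm (Fin n)) (i : ℕ) : Set (Triple n) :=
  {(u * s n i, v, w), (u, v * s n i, w), (u, v, w * s n i)}

/-- P and P′ are joined by a single descent-cycling move. -/
def DCMove {n : ℕ} (P P' : Triple n) : Prop :=
  ∃ (u v w : Equiv.Perm (Fin n)) (i : ℕ),
    len u + len v + len w + 1 = n.choose 2 ∧
    Ascent u i ∧ Ascent v i ∧ Ascent w i ∧
    P ∈ MoveSet u v w i ∧ P' ∈ MoveSet u v w i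

/-- dc-equivalence: the reflexive–transitive closure of descent-cycling moves. -/
def DCEquiv {n : ℕ} : Triple n → Triple n → Prop := Relation.ReflTransGen DCMove

/-- An admissible functional on triples of permutations: constant on dc-equivalence
classes of Schubert problems, zero on dc-trivial Schubert problems, one on (id,id,w₀). -/
def Admissible {n : ℕ} (f : Triple n → ℤ) : Prop :=
  (∀ P P' : Triple n, IsSchubert P → IsSchubert P' → DCEquiv P P' → f P = f P') ∧
  (∀ P : Triple n, DCTrivial P → f P = 0) ∧
  f (1, 1, w0 n) = 1

end DC

/-! Induct on `ℓ(π)`. Since `σ j < σ k`, the permutation `σ` ascends at some `m` with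
`j ≤ m < k`, and `m ≠ i` because `j` and `k` lie on one side of the gap between `i` and `i + 1`.
If `π` ascends at `m` too, then `π`, `s_i` and `σ` all ascend at `m` and the problem is
dc-trivial. Otherwise the descent-cycling move at `m` based at `(π s_m, s_i, σ)` trades
`(π, s_i, σ)` for `(π s_m, s_i, σ s_m)`, which has the same shape for the transposition of
`s_m j` and `s_m k` (still inside `[j, k]`) and `ℓ(π s_m) < ℓ(π)`. -/

open Equiv Finset

namespace DC

variable {n m : ℕ}

lemma s_of_lt (hm : m + 1 < n) : s n m = swap ⟨m, Nat.lt_of_succ_lt hm⟩ ⟨m + 1, hm⟩ :=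
  dif_pos hm

lemma s_mul_s : s n m * s n m = 1 := by
  unfold s; split
  · exact swap_mul_self _ _
  · exact one_mul 1

lemma s_s_apply (x : Fin n) : s n m (s n m x) = x := by
  rw [← Perm.mul_apply, s_mul_s, Perm.one_apply]

lemma s_inv : (s n m)⁻¹ = s n m :=
  inv_eq_of_mul_eq_one_right s_mul_s

section Order

variable (hm : m + 1 < n) {x y : Fin n}
include hm

lemma s_apply_lt_s_apply_iff (h₁ : ¬((x : ℕ) = m ∧ (y : ℕ) = m + 1))
    (h₂ : ¬((x : ℕ) = m + 1 ∧ (y : ℕ) = m)) : s n m x < s n m y ↔ x < y := by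
  rw [s_of_lt hm]; simp only [swap_apply_def]
  split_ifs <;> simp only [Fin.ext_iff, Fin.lt_def] at * <;> omega

lemma le_s_apply (hx : (x : ℕ) ≤ m) : x ≤ s n m x := by
  rw [s_of_lt hm]; simp only [swap_apply_def]
  split_ifs <;> simp only [Fin.ext_iff, Fin.le_def] at * <;> omega

lemma s_apply_le (hx : m < (x : ℕ)) : s n m x ≤ x := by
  rw [s_of_lt hm]; simp only [swap_apply_def]
  split_ifs <;> simp only [Fin.ext_iff, Fin.le_def] at * <;> omega

end Order

lemma len_mul_s_of_lt (π : Perm (Fin n)) (hm : m + 1 < n)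
    (h : π ⟨m, Nat.lt_of_succ_lt hm⟩ < π ⟨m + 1, hm⟩) :
    len (π * s n m) = len π + 1 := by
  set a : Fin n := ⟨m, Nat.lt_of_succ_lt hm⟩
  set b : Fin n := ⟨m + 1, hm⟩
  have hs : s n m = swap a b := s_of_lt hm
  have hab : a < b := Fin.mk_lt_mk.mpr m.lt_succ_self
  -- `s_m × s_m` maps the inversions of `π s_m` onto those of `π` together with `(m + 1, m)`.
  have hmem : ∀ x y : Fin n, (s n m x < s n m y ∧ π y < π x) ↔
      (x, y) = (b, a) ∨ (x < y ∧ π y < π x) := by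
    intro x y
    by_cases hba : x = b ∧ y = a
    · obtain ⟨rfl, rfl⟩ := hba
      simp [hs, hab, h]
    by_cases hxy : x = a ∧ y = b
    · obtain ⟨rfl, rfl⟩ := hxy
      simp [h.not_gt, hab.ne]
    rw [s_apply_lt_s_apply_iff hm (fun h => hxy ⟨Fin.ext h.1, Fin.ext h.2⟩)
      (fun h => hba ⟨Fin.ext h.1, Fin.ext h.2⟩)]
    simp [hba]
  unfold len
  rw [← card_insert_of_notMem (a := (b, a)) (by simp [hab.not_gt])]
  refine card_equiv ((s n m).prodCongr (s n m)) fun p => ?_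
  obtain ⟨x, y⟩ := p
  rw [mem_filter, mem_insert, mem_filter]
  simpa [s_s_apply] using hmem (s n m x) (s n m y)

lemma len_mul_s_of_gt (π : Perm (Fin n)) (hm : m + 1 < n)
    (h : π ⟨m + 1, hm⟩ < π ⟨m, Nat.lt_of_succ_lt hm⟩) :
    len (π * s n m) + 1 = len π := by
  have h' : (π * s n m) ⟨m, Nat.lt_of_succ_lt hm⟩ < (π * s n m) ⟨m + 1, hm⟩ := by
    simpa [s_of_lt hm] using h
  simpa [mul_assoc, s_mul_s] using (len_mul_s_of_lt (π * s n m) hm h').symm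

lemma len_one : len (1 : Perm (Fin n)) = 0 :=
  card_eq_zero.mpr (filter_eq_empty_iff.mpr fun _ _ h => lt_asymm h.1 h.2)

lemma len_s (hm : m + 1 < n) : len (s n m) = 1 := by
  simpa [len_one] using len_mul_s_of_lt 1 hm (Fin.mk_lt_mk.mpr m.lt_succ_self)

lemma compl_apply (π : Perm (Fin n)) (x : Fin n) : compl π x = (π x).rev := rfl

lemma compl_mul (π τ : Perm (Fin n)) : compl (π * τ) = compl π * τ :=
  (mul_assoc _ _ _).symm

lemma len_add_len_compl (π : Perm (Fin n)) : len π + len (compl π) = n.choose 2 := by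
  have hcompl : ∀ p : Fin n × Fin n, p.1 < p.2 →
      (compl π p.2 < compl π p.1 ↔ ¬π p.2 < π p.1) := fun p hp => by
    rw [compl_apply, compl_apply, Fin.rev_lt_rev, not_lt, (π.injective.ne hp.ne).le_iff_lt]
  have hpairs := Fintype.card_product_filter_lt (α := Fin n)
  rw [Fintype.card_fin] at hpairs
  rw [← hpairs, ← card_filter_add_card_filter_not (fun p : Fin n × Fin n => π p.2 < π p.1)]
  unfold len
  rw [filter_filter, filter_filter]
  congr 2
  exact filter_congr fun p _ => and_congr_right (hcompl p)

lemma ascent_s_of_ne {i : ℕ} (hi : i + 1 < n) (hm : m + 1 < n) (hmi : m ≠ i) :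
    Ascent (s n i) m := by
  refine ⟨hm, ?_⟩
  rw [s_of_lt hi]; simp only [swap_apply_def]
  split_ifs <;> simp only [Fin.ext_iff, Fin.lt_def] at * <;> omega

lemma ascent_or_descent (π : Perm (Fin n)) (hm : m + 1 < n) : Ascent π m ∨ Descent π m :=
  (lt_or_gt_of_ne (π.injective.ne (by simp))).imp (⟨hm, ·⟩) (⟨hm, ·⟩)

lemma exists_ascent_of_lt (ρ : Perm (Fin n)) {j k : Fin n} (hjk : j < k) (h : ρ j < ρ k) :
    ∃ m, (j : ℕ) ≤ m ∧ m < k ∧ Ascent ρ m := by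
  by_contra! hno
  have hanti : ∀ l, (j : ℕ) ≤ l → ∀ hl : l < n, l ≤ k → ρ ⟨l, hl⟩ ≤ ρ j := by
    intro l hjl
    induction l, hjl using Nat.le_induction with
    | base => exact fun _ _ => le_rfl
    | succ l hjl ih =>
      intro hl hlk
      have hdesc : ¬Ascent ρ l := hno l hjl (by omega)
      exact (not_lt.mp fun hlt => hdesc ⟨hl, hlt⟩).trans (ih _ (by omega))
  exact (hanti k hjk.le k.isLt le_rfl).not_gt h

/-- `σ = π̄ (j k)` is a Bruhat cover of `π̄ = w₀ π`, with `j < k` on one side of the gap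
between `i` and `i + 1`. -/
structure SameSideCover (i : ℕ) (π σ : Perm (Fin n)) (j k : Fin n) : Prop where
  lt : j < k
  compl_lt : compl π k < compl π j
  eq_mul_swap : σ = compl π * swap j k
  len_add_one : len σ + 1 = len (compl π)
  same_side : (k : ℕ) ≤ i ∨ i + 1 ≤ (j : ℕ)

namespace SameSideCover

variable {i : ℕ} {π σ : Perm (Fin n)} {j k : Fin n}

lemma isSchubert (h : SameSideCover i π σ j k) (hi : i + 1 < n) :
    IsSchubert (π, s n i, σ) := by
  have := len_add_len_compl π
  have := h.len_add_one
  change len π + len (s n i) + len σ = n.choose 2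
  rw [len_s hi]
  omega

lemma mul_s (h : SameSideCover i π σ j k) (hm : m + 1 < n) (hjm : (j : ℕ) ≤ m)
    (hmk : m < (k : ℕ)) (hπ : Descent π m) (hσ : Ascent σ m) :
    SameSideCover i (π * s n m) (σ * s n m) (s n m j) (s n m k) where
  lt := by
    refine (s_apply_lt_s_apply_iff hm (fun hjk => ?_) (by omega)).mpr h.lt
    obtain ⟨_, hπm⟩ := hπ
    have hcompl := h.compl_lt
    rw [compl_apply, compl_apply, Fin.rev_lt_rev, show j = ⟨m, Nat.lt_of_succ_lt hm⟩ from
      Fin.ext hjk.1, show k = ⟨m + 1, hm⟩ from Fin.ext hjk.2] at hcompl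
    exact hcompl.not_gt hπm
  compl_lt := by simpa [compl_mul, s_s_apply] using h.compl_lt
  eq_mul_swap := by
    rw [h.eq_mul_swap, compl_mul, mul_assoc, swap_mul_eq_mul_swap, s_inv, mul_assoc]
  len_add_one := by
    obtain ⟨_, hπm⟩ := hπ
    obtain ⟨_, hσm⟩ := hσ
    have hcompl : compl π ⟨m, Nat.lt_of_succ_lt hm⟩ < compl π ⟨m + 1, hm⟩ :=
      Fin.rev_lt_rev.mpr hπm
    rw [len_mul_s_of_lt σ hm hσm, compl_mul, len_mul_s_of_lt _ hm hcompl, h.len_add_one]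
  same_side := by
    have := le_s_apply hm hjm
    have := s_apply_le hm hmk
    have := h.same_side
    rw [Fin.le_def] at *
    omega

end SameSideCover

lemma dcMove_mul_s {i : ℕ} {π σ : Perm (Fin n)} (hP : IsSchubert (π, s n i, σ))
    (hi : i + 1 < n) (hm : m + 1 < n) (hmi : m ≠ i) (hπ : Descent π m) (hσ : Ascent σ m) :
    DCMove (π, s n i, σ) (π * s n m, s n i, σ * s n m) := by
  obtain ⟨_, hπm⟩ := hπ
  have hlen := len_mul_s_of_gt π hm hπm
  have hP' : len π + len (s n i) + len σ = n.choose 2 := hP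
  refine ⟨π * s n m, s n i, σ, m, by omega, ⟨hm, ?_⟩,
    ascent_s_of_ne hi hm hmi, hσ, ?_, by simp [MoveSet]⟩
  · simpa [s_of_lt hm] using hπm
  · simp [MoveSet, mul_assoc, s_mul_s]

theorem SameSideCover.apply_eq_zero {f : Triple n → ℤ} (hf : Admissible f) {i : ℕ}
    (hi : i + 1 < n) {π σ : Perm (Fin n)} {j k : Fin n} (h : SameSideCover i π σ j k) :
    f (π, s n i, σ) = 0 := by
  induction hN : len π using Nat.strong_induction_on generalizing π σ j k with
  | _ N ih =>
  have hσjk : σ j < σ k := by simpa [h.eq_mul_swap] using h.compl_lt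
  obtain ⟨m, hjm, hmk, hσm⟩ := exists_ascent_of_lt σ h.lt hσjk
  have hmi : m ≠ i := by have := h.same_side; omega
  have hm : m + 1 < n := hσm.1
  rcases ascent_or_descent π hm with hπm | hπm
  · exact hf.2.1 _ ⟨h.isSchubert hi, m, hπm, ascent_s_of_ne hi hm hmi, hσm⟩
  · have h' := h.mul_s hm hjm hmk hπm hσm
    rw [hf.1 _ _ (h.isSchubert hi) (h'.isSchubert hi)
      (.single (dcMove_mul_s (h.isSchubert hi) hi hm hmi hπm hσm))]
    have hlen := len_mul_s_of_gt π hm hπm.2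
    exact ih _ (by omega) h' rfl

end DC

theorem statement1_general {n : ℕ} (f : DC.Triple n → ℤ) (hf : DC.Admissible f)
    (π : Equiv.Perm (Fin n)) (j k : Fin n) (hjk : j < k)
    (hdesc : DC.compl π k < DC.compl π j)
    (σ : Equiv.Perm (Fin n)) (hσ : σ = DC.compl π * Equiv.swap j k)
    (hlen : DC.len σ + 1 = DC.len (DC.compl π))
    (i : ℕ) (hi : i + 1 < n) (hside : (k : ℕ) ≤ i ∨ i + 1 ≤ (j : ℕ)) :
    f (π, DC.s n i, σ) = 0 :=
  DC.SameSideCover.apply_eq_zero hf hi ⟨hjk, hdesc, hσ, hlen, hside⟩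

/-- Monk's rule, non-straddling case: if σ is obtained from π̄ = w₀∘π by switching the
entries in positions j < k, decreasing the length by exactly one, and the swapped
positions both lie on one side of the gap between i and i+1 (k ≤ i or i+1 ≤ j),
then f(π, s_i, σ) = 0 for any admissible functional f. -/
theorem statement1 {n : ℕ} (hn : 2 ≤ n) (f : DC.Triple n → ℤ) (hf : DC.Admissible f)
    (π : Equiv.Perm (Fin n)) (j k : Fin n) (hjk : j < k)
    (hdesc : DC.compl π k < DC.compl π j)
    (σ : Equiv.Perm (Fin n)) (hσ : σ = DC.compl π * Equiv.swap j k)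
    (hlen : DC.len σ + 1 = DC.len (DC.compl π))
    (i : ℕ) (hi : i + 1 < n) (hside : (k : ℕ) ≤ i ∨ i + 1 ≤ (j : ℕ)) :
    f (π, DC.s n i, σ) = 0 :=
  statement1_general f hf π j k hjk hdesc σ hσ hlen i hi hside
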